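/- Correctness of the weak spectroscopy game: for every energy e ∈ En∞, every process p, and every set of processes Q, the following are equivalent: (1) there exists a formula φ ∈ HML_srbb with expr(φ) ≤ e that distinguishes p from Q; (2) e ∈ Win_a([p,Q]_a) in the weak spectroscopy energy game G△. -/

import Mathlib

open Classical

noncomputable section

namespace Spectroscopy

/-! ### Energies and declining energy games -/

/-- Energies: 8-dimensional vectors over `ℕ ∪ {∞}`, ordered componentwise. -/
abbrev Energy : Type := Fin 8 → ℕ∞

/-- The `i`-th unit vector. -/
def unitE (i : Fin 8) : Energy := fun k => if k = i then 1 else 0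

/-- The vector with value `v` at position `i` and `0` elsewhere. -/
def onlyAt (i : Fin 8) (v : ℕ∞) : Energy := fun k => if k = i then v else 0

/-- Components of energy updates: `-1`, `0`, or minimum selection `min_D`.
For the component at position `k`, `minWith D` selects the minimum over the
positions `{k} ∪ D`, so the requirement `k ∈ D` of the paper holds by
construction. -/
inductive UpdComp : Type
  | decr : UpdComp
  | zero : UpdComp
  | minWith (D : Finset (Fin 8)) : UpdComp
deriving DecidableEq

/-- Energy updates. -/
abbrev Update : Type := Fin 8 → UpdComp

/-- Partial application of an update to an energy (`none` when a component
would become negative). -/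
def upd (e : Energy) (u : Update) : Option Energy :=
  if ∀ k, u k = UpdComp.decr → e k ≠ 0 then
    some (fun k =>
      match u k with
      | UpdComp.decr => e k - 1
      | UpdComp.zero => e k
      | UpdComp.minWith D => (insert k D).inf e)
  else none

/-- A declining energy game: positions, a defender predicate (attacker
positions are the non-defender ones), and moves labeled with updates. -/
structure EGame (Pos : Type) where
  defender : Pos → Prop
  move : Pos → Update → Pos → Prop

/-- Attacker winning budgets `Win_a`: at an attacker position some move must
lead to an attacker-won position under the updated energy; at a defender
position every move must (be defined and) lead to an attacker-won position. -/
inductive EGame.Win {Pos : Type} (G : EGame Pos) : Pos → Energy → Prop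
  | attack {g : Pos} {u : Update} {g' : Pos} {e e' : Energy} :
      ¬ G.defender g → G.move g u g' → upd e u = some e' → G.Win g' e' →
      G.Win g e
  | defend {g : Pos} {e : Energy} :
      G.defender g →
      (∀ u g', G.move g u g' → upd e u ≠ none) →
      (∀ u g' e', G.move g u g' → upd e u = some e' → G.Win g' e') →
      G.Win g e

/-! ### Labeled transition systems with silent steps -/

section LTS

variable {Proc Act : Type}

/-- Weak internal steps `↠`: reflexive-transitive closure of `τ`-steps. -/
def Star (Tr : Proc → Act → Proc → Prop) (τ : Act) : Proc → Proc → Prop :=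
  Relation.ReflTransGen fun p p' => Tr p τ p'

/-- A process is stable if it has no `τ`-step. -/
def Stable (Tr : Proc → Act → Proc → Prop) (τ : Act) (p : Proc) : Prop :=
  ∀ p', ¬ Tr p τ p'

/-- Optional step `p →(α) p'`: a real `α`-step, or `α = τ` and `p = p'`. -/
def OptStep (Tr : Proc → Act → Proc → Prop) (τ : Act) (p : Proc) (α : Act) (p' : Proc) : Prop :=
  Tr p α p' ∨ (α = τ ∧ p = p')

/-- Lift of `→a` to sets. -/
def SetStep (Tr : Proc → Act → Proc → Prop) (Q : Set Proc) (a : Act) (Q' : Set Proc) : Prop :=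
  Q' = {q' | ∃ q ∈ Q, Tr q a q'}

/-- Lift of `↠` to sets. -/
def SetStar (Tr : Proc → Act → Proc → Prop) (τ : Act) (Q Q' : Set Proc) : Prop :=
  Q' = {q' | ∃ q ∈ Q, Star Tr τ q q'}

/-- Lift of `→(α)` to sets. -/
def SetOpt (Tr : Proc → Act → Proc → Prop) (τ : Act) (Q : Set Proc) (α : Act)
    (Q' : Set Proc) : Prop :=
  Q' = {q' | ∃ q ∈ Q, OptStep Tr τ q α q'}

end LTS

/-! ### The logic HML_srbb -/

mutual
/-- Formulas `φ` of HML_srbb: `⟨ε⟩χ` or immediate conjunctions `⋀Ψ`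
(conjunctions are indexed by an arbitrary type). `⊤` is the empty conjunction. -/
inductive Formula (Act : Type) (τ : Act) : Type 1
  | delayed : DFormula Act τ → Formula Act τ
  | conj : (I : Type) → (I → Conjunct Act τ) → Formula Act τ

/-- Delayed formulas `χ`: observations `⟨a⟩φ` (with `a ≠ τ`), standard
conjunctions `⋀Ψ`, stable conjunctions `⋀({¬⟨τ⟩⊤} ∪ Ψ)`, and branching
conjunctions `⋀({(α)φ} ∪ Ψ)`. -/
inductive DFormula (Act : Type) (τ : Act) : Type 1
  | obs : (a : Act) → a ≠ τ → Formula Act τ → DFormula Act τ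
  | conj : (I : Type) → (I → Conjunct Act τ) → DFormula Act τ
  | stableConj : (I : Type) → (I → Conjunct Act τ) → DFormula Act τ
  | branchConj : (α : Act) → Formula Act τ → (I : Type) → (I → Conjunct Act τ) → DFormula Act τ

/-- Conjuncts `ψ`: positive `⟨ε⟩χ` or negative `¬⟨ε⟩χ`. -/
inductive Conjunct (Act : Type) (τ : Act) : Type 1
  | pos : DFormula Act τ → Conjunct Act τ
  | neg : DFormula Act τ → Conjunct Act τ
end

section Semantics

variable {Proc Act : Type}

mutual
/-- Semantics `⟦φ⟧`. -/
def Sat (Tr : Proc → Act → Proc → Prop) (τ : Act) (p : Proc) : Formula Act τ → Prop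
  | .delayed χ => ∃ p', Star Tr τ p p' ∧ SatD Tr τ p' χ
  | .conj _ ps => ∀ i, SatC Tr τ p (ps i)

/-- Semantics `⟦χ⟧^ε` of delayed formulas. -/
def SatD (Tr : Proc → Act → Proc → Prop) (τ : Act) (p : Proc) : DFormula Act τ → Prop
  | .obs a _ φ => ∃ p', Tr p a p' ∧ Sat Tr τ p' φ
  | .conj _ ps => ∀ i, SatC Tr τ p (ps i)
  | .stableConj _ ps => Stable Tr τ p ∧ ∀ i, SatC Tr τ p (ps i)
  | .branchConj α φ _ ps =>
      (∃ p', OptStep Tr τ p α p' ∧ Sat Tr τ p' φ) ∧ ∀ i, SatC Tr τ p (ps i)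

/-- Semantics `⟦ψ⟧^∧` of conjuncts. -/
def SatC (Tr : Proc → Act → Proc → Prop) (τ : Act) (p : Proc) : Conjunct Act τ → Prop
  | .pos χ => ∃ p', Star Tr τ p p' ∧ SatD Tr τ p' χ
  | .neg χ => ¬ ∃ p', Star Tr τ p p' ∧ SatD Tr τ p' χ
end

/-- `φ` distinguishes `p` from the set `Q`. -/
def Distinguishes (Tr : Proc → Act → Proc → Prop) (τ : Act) (φ : Formula Act τ)
    (p : Proc) (Q : Set Proc) : Prop :=
  Sat Tr τ p φ ∧ ∀ q ∈ Q, ¬ Sat Tr τ q φ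

/-- The delayed formula `χ` distinguishes `p` from the set `Q` w.r.t. `⟦·⟧^ε`. -/
def DistinguishesD (Tr : Proc → Act → Proc → Prop) (τ : Act) (χ : DFormula Act τ)
    (p : Proc) (Q : Set Proc) : Prop :=
  SatD Tr τ p χ ∧ ∀ q ∈ Q, ¬ SatD Tr τ q χ

/-- The conjunct `ψ` distinguishes `p` from `q` w.r.t. `⟦·⟧^∧`. -/
def DistinguishesC (Tr : Proc → Act → Proc → Prop) (τ : Act) (ψ : Conjunct Act τ)
    (p q : Proc) : Prop :=
  SatC Tr τ p ψ ∧ ¬ SatC Tr τ q ψ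

/-- Stability-respecting branching bisimulations: symmetric relations with the
branching-bisimulation transfer property and the stability-respecting
property. -/
def IsSRBBisim (Tr : Proc → Act → Proc → Prop) (τ : Act) (R : Proc → Proc → Prop) : Prop :=
  Symmetric R ∧
  (∀ p q, R p q → ∀ α p', Tr p α p' →
    (α = τ ∧ R p' q) ∨
      ∃ q' q'', Star Tr τ q q' ∧ Tr q' α q'' ∧ R p q' ∧ R p' q'') ∧
  (∀ p q, R p q → Stable Tr τ p →
    ∃ q', Star Tr τ q q' ∧ Stable Tr τ q' ∧ R p q')

end Semantics

/-! ### Expressiveness prices -/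

section Expr

variable {Act : Type} {τ : Act}

mutual
/-- Expressiveness price `expr` of formulas. -/
def exprF : Formula Act τ → Energy
  | .delayed χ => exprE χ
  | .conj I ps => ⨆ _ : Nonempty I, ((unitE 4 + unitE 2) + ⨆ i, exprC (ps i))

/-- Expressiveness price `expr^ε` of delayed formulas. -/
def exprE : DFormula Act τ → Energy
  | .obs _ _ φ => unitE 0 + exprF φ
  | .conj I ps => ⨆ _ : Nonempty I, (unitE 2 + ⨆ i, exprC (ps i))
  | .stableConj _ ps => unitE 3 + ⨆ i, exprC (ps i)
  | .branchConj _ φ _ ps =>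
      (unitE 1 + unitE 2) +
        (((unitE 0 + exprF φ) ⊔ onlyAt 5 (1 + exprF φ 0)) ⊔ ⨆ i, exprC (ps i))

/-- Expressiveness price `expr^∧` of conjuncts. -/
def exprC : Conjunct Act τ → Energy
  | .pos χ => exprE χ ⊔ onlyAt 5 (exprE χ 0)
  | .neg χ => (unitE 7 + exprE χ) ⊔ onlyAt 6 (exprE χ 0)
end

end Expr

/-! ### The weak spectroscopy energy game -/

/-- Positions of the weak spectroscopy game. -/
inductive GPos (Proc Act : Type) : Type
  | att (p : Proc) (Q : Set Proc)                                 -- `[p,Q]_a`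
  | attD (p : Proc) (Q : Set Proc)                                -- `[p,Q]^ε_a`
  | attC (p q : Proc)                                             -- `[p,q]^∧_a`
  | attB (p : Proc) (Q : Set Proc)                                -- `[p,Q]^η_a`
  | defC (p : Proc) (Q : Set Proc)                                -- `(p,Q)_d`
  | defS (p : Proc) (Q : Set Proc)                                -- `(p,Q)^s_d`
  | defB (p : Proc) (α : Act) (p' : Proc) (Q Qa : Set Proc)       -- `(p,α,p',Q,Qa)^η_d`

/-- The zero update. -/
def zeroU : Update := fun _ => UpdComp.zero

/-- The update `-ê_i`. -/
def decU (i : Fin 8) : Update := fun k => if k = i then UpdComp.decr else UpdComp.zero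

/-- The update `(min_{1,6},0,0,0,0,0,0,0)`. -/
def minU16 : Update := fun k => if k = 0 then UpdComp.minWith {5} else UpdComp.zero

/-- The update `(min_{1,7},0,0,0,0,0,0,-1)`. -/
def minU17dec8 : Update := fun k =>
  if k = 0 then UpdComp.minWith {6} else if k = 7 then UpdComp.decr else UpdComp.zero

/-- The update `(0,-1,-1,0,0,0,0,0)`. -/
def dec23 : Update := fun k => if k = 1 ∨ k = 2 then UpdComp.decr else UpdComp.zero

/-- The update `(min_{1,6},-1,-1,0,0,0,0,0)`. -/
def minU16dec23 : Update := fun k =>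
  if k = 0 then UpdComp.minWith {5}
  else if k = 1 ∨ k = 2 then UpdComp.decr else UpdComp.zero

section Game

variable {Proc Act : Type}

/-- Moves of the weak spectroscopy game. -/
inductive GMove (Tr : Proc → Act → Proc → Prop) (τ : Act) :
    GPos Proc Act → Update → GPos Proc Act → Prop
  | delay {p : Proc} {Q Q' : Set Proc} :
      SetStar Tr τ Q Q' →
      GMove Tr τ (.att p Q) zeroU (.attD p Q')
  | procrastination {p p' : Proc} {Q : Set Proc} :
      Tr p τ p' → p ≠ p' →
      GMove Tr τ (.attD p Q) zeroU (.attD p' Q)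
  | observation {p p' : Proc} {a : Act} {Q Q' : Set Proc} :
      Tr p a p' → a ≠ τ → SetStep Tr Q a Q' →
      GMove Tr τ (.attD p Q) (decU 0) (.att p' Q')
  | finishing {p : Proc} :
      GMove Tr τ (.att p ∅) zeroU (.defC p ∅)
  | immediateConj {p : Proc} {Q : Set Proc} :
      Q ≠ ∅ →
      GMove Tr τ (.att p Q) (decU 4) (.defC p Q)
  | lateConj {p : Proc} {Q : Set Proc} :
      GMove Tr τ (.attD p Q) zeroU (.defC p Q)
  | conjAnswer {p q : Proc} {Q : Set Proc} :
      q ∈ Q →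
      GMove Tr τ (.defC p Q) (decU 2) (.attC p q)
  | posConjunct {p q : Proc} {Q : Set Proc} :
      SetStar Tr τ {q} Q →
      GMove Tr τ (.attC p q) minU16 (.attD p Q)
  | negConjunct {p q : Proc} {Q : Set Proc} :
      SetStar Tr τ {p} Q → p ≠ q →
      GMove Tr τ (.attC p q) minU17dec8 (.attD q Q)
  | stableConj {p : Proc} {Q : Set Proc} :
      Stable Tr τ p →
      GMove Tr τ (.attD p Q) zeroU (.defS p {q ∈ Q | Stable Tr τ q})
  | conjStableAnswer {p q : Proc} {Q : Set Proc} :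
      q ∈ Q →
      GMove Tr τ (.defS p Q) (decU 3) (.attC p q)
  | stableFinishing {p : Proc} :
      GMove Tr τ (.defS p ∅) (decU 3) (.defC p ∅)
  | branchConj {p p' : Proc} {α : Act} {Q Qa : Set Proc} :
      OptStep Tr τ p α p' → Qa ⊆ Q →
      GMove Tr τ (.attD p Q) zeroU (.defB p α p' (Q \ Qa) Qa)
  | branchAnswer {p p' q : Proc} {α : Act} {Q Qa : Set Proc} :
      q ∈ Q →
      GMove Tr τ (.defB p α p' Q Qa) dec23 (.attC p q)
  | branchObservation {p p' : Proc} {α : Act} {Q Qa Q' : Set Proc} :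
      SetOpt Tr τ Qa α Q' →
      GMove Tr τ (.defB p α p' Q Qa) minU16dec23 (.attB p' Q')
  | branchAccounting {p : Proc} {Q : Set Proc} :
      GMove Tr τ (.attB p Q) (decU 0) (.att p Q)

/-- Defender positions of the weak spectroscopy game. -/
def isDefender : GPos Proc Act → Prop
  | .defC _ _ => True
  | .defS _ _ => True
  | .defB _ _ _ _ _ => True
  | _ => False

/-- The weak spectroscopy energy game `G△`. -/
def specGame (Tr : Proc → Act → Proc → Prop) (τ : Act) : EGame (GPos Proc Act) where
  defender := isDefender
  move := GMove Tr τ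

end Game

/-! ### Strategy formulas -/

section Strat

variable {Proc Act : Type}

mutual
/-- Attacker strategy formulas (formula sort). -/
inductive StratF (Tr : Proc → Act → Proc → Prop) (τ : Act) :
    GPos Proc Act → Energy → Formula Act τ → Prop
  | delay {p : Proc} {Q Q' : Set Proc} {u : Update} {e e' : Energy} {χ : DFormula Act τ} :
      GMove Tr τ (.att p Q) u (.attD p Q') →
      upd e u = some e' →
      (specGame Tr τ).Win (.attD p Q') e' →
      StratD Tr τ (.attD p Q') e' χ →
      StratF Tr τ (.att p Q) e (.delayed χ)
  | immediateConj {p : Proc} {Q : Set Proc} {u : Update} {e e' : Energy}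
      {I : Type} {ps : I → Conjunct Act τ} :
      GMove Tr τ (.att p Q) u (.defC p Q) →
      upd e u = some e' →
      (specGame Tr τ).Win (.defC p Q) e' →
      StratD Tr τ (.defC p Q) e' (.conj I ps) →
      StratF Tr τ (.att p Q) e (.conj I ps)

/-- Attacker strategy formulas (delayed-formula sort). -/
inductive StratD (Tr : Proc → Act → Proc → Prop) (τ : Act) :
    GPos Proc Act → Energy → DFormula Act τ → Prop
  | procrastination {p p' : Proc} {Q : Set Proc} {u : Update} {e e' : Energy}
      {χ : DFormula Act τ} :
      GMove Tr τ (.attD p Q) u (.attD p' Q) →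
      upd e u = some e' →
      (specGame Tr τ).Win (.attD p' Q) e' →
      StratD Tr τ (.attD p' Q) e' χ →
      StratD Tr τ (.attD p Q) e χ
  | observation {p p' : Proc} {a : Act} {Q Q' : Set Proc} {u : Update} {e e' : Energy}
      {φ : Formula Act τ} (ha : a ≠ τ) :
      GMove Tr τ (.attD p Q) u (.att p' Q') →
      Tr p a p' → SetStep Tr Q a Q' →
      upd e u = some e' →
      (specGame Tr τ).Win (.att p' Q') e' →
      StratF Tr τ (.att p' Q') e' φ →
      StratD Tr τ (.attD p Q) e (.obs a ha φ)
  | lateConj {p : Proc} {Q : Set Proc} {u : Update} {e e' : Energy} {χ : DFormula Act τ} :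
      GMove Tr τ (.attD p Q) u (.defC p Q) →
      upd e u = some e' →
      (specGame Tr τ).Win (.defC p Q) e' →
      StratD Tr τ (.defC p Q) e' χ →
      StratD Tr τ (.attD p Q) e χ
  | stable {p : Proc} {Q Q' : Set Proc} {u : Update} {e e' : Energy} {χ : DFormula Act τ} :
      GMove Tr τ (.attD p Q) u (.defS p Q') →
      upd e u = some e' →
      (specGame Tr τ).Win (.defS p Q') e' →
      StratD Tr τ (.defS p Q') e' χ →
      StratD Tr τ (.attD p Q) e χ
  | branch {p p' : Proc} {α : Act} {Q Q' Qa : Set Proc} {u : Update} {e e' : Energy}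
      {χ : DFormula Act τ} :
      GMove Tr τ (.attD p Q) u (.defB p α p' Q' Qa) →
      upd e u = some e' →
      (specGame Tr τ).Win (.defB p α p' Q' Qa) e' →
      StratD Tr τ (.defB p α p' Q' Qa) e' χ →
      StratD Tr τ (.attD p Q) e χ
  | conj {p : Proc} {Q : Set Proc} {e : Energy}
      (us : {q // q ∈ Q} → Update) (es : {q // q ∈ Q} → Energy)
      (ψs : {q // q ∈ Q} → Conjunct Act τ) :
      (∀ qq : {q // q ∈ Q}, GMove Tr τ (.defC p Q) (us qq) (.attC p qq.1)) →
      (∀ qq : {q // q ∈ Q}, upd e (us qq) = some (es qq)) →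
      (∀ qq : {q // q ∈ Q}, (specGame Tr τ).Win (.attC p qq.1) (es qq)) →
      (∀ qq : {q // q ∈ Q}, StratC Tr τ (.attC p qq.1) (es qq) (ψs qq)) →
      StratD Tr τ (.defC p Q) e (.conj {q // q ∈ Q} ψs)
  | stableConj {p : Proc} {Q : Set Proc} {e : Energy}
      (hne : Q.Nonempty)
      (us : {q // q ∈ Q} → Update) (es : {q // q ∈ Q} → Energy)
      (ψs : {q // q ∈ Q} → Conjunct Act τ) :
      (∀ qq : {q // q ∈ Q}, GMove Tr τ (.defS p Q) (us qq) (.attC p qq.1)) →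
      (∀ qq : {q // q ∈ Q}, upd e (us qq) = some (es qq)) →
      (∀ qq : {q // q ∈ Q}, (specGame Tr τ).Win (.attC p qq.1) (es qq)) →
      (∀ qq : {q // q ∈ Q}, StratC Tr τ (.attC p qq.1) (es qq) (ψs qq)) →
      StratD Tr τ (.defS p Q) e (.stableConj {q // q ∈ Q} ψs)
  | stableFinish {p : Proc} {u : Update} {e e' : Energy} :
      GMove Tr τ (.defS p ∅) u (.defC p ∅) →
      upd e u = some e' →
      (specGame Tr τ).Win (.defC p (∅ : Set Proc)) e' →
      StratD Tr τ (.defS p ∅) e (.stableConj Empty fun x => x.elim)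
  | branchConj {p p' : Proc} {α : Act} {Q Qa Q' : Set Proc} {ua ua' : Update}
      {e e1 ea : Energy} {φa : Formula Act τ}
      (us : {q // q ∈ Q} → Update) (es : {q // q ∈ Q} → Energy)
      (ψs : {q // q ∈ Q} → Conjunct Act τ) :
      GMove Tr τ (.defB p α p' Q Qa) ua (.attB p' Q') →
      GMove Tr τ (.attB p' Q') ua' (.att p' Q') →
      upd e ua = some e1 →
      upd e1 ua' = some ea →
      (specGame Tr τ).Win (.att p' Q') ea →
      StratF Tr τ (.att p' Q') ea φa →
      (∀ qq : {q // q ∈ Q}, GMove Tr τ (.defB p α p' Q Qa) (us qq) (.attC p qq.1)) →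
      (∀ qq : {q // q ∈ Q}, upd e (us qq) = some (es qq)) →
      (∀ qq : {q // q ∈ Q}, (specGame Tr τ).Win (.attC p qq.1) (es qq)) →
      (∀ qq : {q // q ∈ Q}, StratC Tr τ (.attC p qq.1) (es qq) (ψs qq)) →
      StratD Tr τ (.defB p α p' Q Qa) e (.branchConj α φa {q // q ∈ Q} ψs)

/-- Attacker strategy formulas (conjunct sort). -/
inductive StratC (Tr : Proc → Act → Proc → Prop) (τ : Act) :
    GPos Proc Act → Energy → Conjunct Act τ → Prop
  | pos {p q : Proc} {Q' : Set Proc} {u : Update} {e e' : Energy} {χ : DFormula Act τ} :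
      GMove Tr τ (.attC p q) u (.attD p Q') →
      upd e u = some e' →
      (specGame Tr τ).Win (.attD p Q') e' →
      StratD Tr τ (.attD p Q') e' χ →
      StratC Tr τ (.attC p q) e (.pos χ)
  | neg {p q : Proc} {P' : Set Proc} {u : Update} {e e' : Energy} {χ : DFormula Act τ} :
      GMove Tr τ (.attC p q) u (.attD q P') →
      upd e u = some e' →
      (specGame Tr τ).Win (.attD q P') e' →
      StratD Tr τ (.attD q P') e' χ →
      StratC Tr τ (.attC p q) e (.neg χ)
end

end Strat


/-!
Both directions rest on one correspondence: for every constructor of HML_srbb, the price of a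
formula is at most `e` exactly when the update of the game move mirroring that constructor is
payable from `e` and leaves at least the price of the immediate subformulas. A distinguishing
formula is then played as an attacker strategy by recursion on the formula; whenever the defender
picks a process `q` at a conjunction, the attacker continues with a conjunct that `q` violates.
Conversely, induction on winning budgets shows that every won position carries a formula of the
matching sort, within budget, distinguishing the position's processes; at defender positions the
conjuncts obtained for the individual answers are collected into one conjunction.
-/

theorem _root_.ENat.add_one_le_iff_ne_zero_and_le_sub_one {x e : ℕ∞} :
    x + 1 ≤ e ↔ e ≠ 0 ∧ x ≤ e - 1 := by
  induction e using ENat.recTopCoe with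
  | top => simp
  | coe n =>
    induction x using ENat.recTopCoe with
    | top => simp
    | coe m => norm_cast; omega

def UpdAtLeast (e : Energy) (u : Update) (x : Energy) : Prop :=
  ∃ e', upd e u = some e' ∧ x ≤ e'

def UpdComp.Covers (e : Energy) (k : Fin 8) (x : ℕ∞) : UpdComp → Prop
  -- not `x ≤ e k - 1`, which truncated subtraction would also grant at `e k = 0`
  | .decr => x + 1 ≤ e k
  | .zero => x ≤ e k
  | .minWith D => ∀ d ∈ insert k D, x ≤ e d

namespace UpdAtLeast

variable {e e' x x' : Energy} {u : Update}

theorem iff_forall_covers : UpdAtLeast e u x ↔ ∀ k, (u k).Covers e k (x k) := by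
  unfold UpdAtLeast upd
  split_ifs with h
  · simp only [Option.some.injEq, exists_eq_left', Pi.le_def]
    refine forall_congr' fun k => ?_
    cases hk : u k <;>
      simp [UpdComp.Covers, ENat.add_one_le_iff_ne_zero_and_le_sub_one, h k, hk]
  · simp only [false_and, exists_false, false_iff, not_forall]
    push Not at h
    obtain ⟨k, hk, h0⟩ := h
    exact ⟨k, by simp [hk, UpdComp.Covers, h0]⟩

theorem mono (h : UpdAtLeast e u x) (he : e ≤ e') (hx : x' ≤ x) : UpdAtLeast e' u x' := by
  rw [iff_forall_covers] at h ⊢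
  intro k
  have hk := h k
  cases hu : u k <;> simp only [hu, UpdComp.Covers] at hk ⊢
  case decr => exact le_trans (by gcongr; exact hx k) (hk.trans (he k))
  case zero => exact (hx k).trans (hk.trans (he k))
  case minWith D => exact fun d hd => (hx k).trans ((hk d hd).trans (he d))

theorem le_of_upd_eq (h : UpdAtLeast e u x) (hu : upd e u = some e') : x ≤ e' := by
  obtain ⟨e'', hu', hx⟩ := h
  cases hu.symm.trans hu'
  exact hx

theorem sup_iff : UpdAtLeast e u (x ⊔ x') ↔ UpdAtLeast e u x ∧ UpdAtLeast e u x' := by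
  refine ⟨fun h => ⟨h.mono le_rfl le_sup_left, h.mono le_rfl le_sup_right⟩, ?_⟩
  rintro ⟨⟨e', hu, hx⟩, h'⟩
  exact ⟨e', hu, sup_le hx (h'.le_of_upd_eq hu)⟩

theorem iSup {ι : Type*} [Nonempty ι] {x : ι → Energy} (h : ∀ i, UpdAtLeast e u (x i)) :
    UpdAtLeast e u (⨆ i, x i) := by
  obtain ⟨e', hu, -⟩ := h (Classical.arbitrary ι)
  exact ⟨e', hu, iSup_le fun i => (h i).le_of_upd_eq hu⟩

theorem zeroU_iff : UpdAtLeast e zeroU x ↔ x ≤ e := by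
  simp [iff_forall_covers, Pi.le_def, zeroU, UpdComp.Covers]

theorem decU_iff {i : Fin 8} : UpdAtLeast e (decU i) x ↔ unitE i + x ≤ e := by
  rw [iff_forall_covers, Pi.le_def]
  refine forall_congr' fun k => ?_
  by_cases h : k = i <;> simp [decU, unitE, UpdComp.Covers, h, add_comm]

theorem minU16_iff : UpdAtLeast e minU16 x ↔ x ⊔ onlyAt 5 (x 0) ≤ e := by
  simp [iff_forall_covers, Pi.le_def, Fin.forall_fin_succ, minU16, onlyAt, UpdComp.Covers]
  tauto

theorem minU17dec8_iff : UpdAtLeast e minU17dec8 x ↔ (unitE 7 + x) ⊔ onlyAt 6 (x 0) ≤ e := by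
  simp [iff_forall_covers, Pi.le_def, Fin.forall_fin_succ, minU17dec8, onlyAt, unitE,
    UpdComp.Covers, add_comm]
  tauto

theorem dec23_iff : UpdAtLeast e dec23 x ↔ (unitE 1 + unitE 2) + x ≤ e := by
  simp [iff_forall_covers, Pi.le_def, Fin.forall_fin_succ, dec23, unitE, UpdComp.Covers, add_comm]

theorem minU16dec23_iff :
    UpdAtLeast e minU16dec23 x ↔ UpdAtLeast e dec23 (x ⊔ onlyAt 5 (x 0)) := by
  simp [iff_forall_covers, Fin.forall_fin_succ, minU16dec23, dec23, onlyAt, UpdComp.Covers]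
  tauto

end UpdAtLeast

namespace EGame.Win

variable {Pos : Type} {G : EGame Pos} {g g' : Pos} {u : Update} {e e' x : Energy}

theorem mono (h : G.Win g e) (he : e ≤ e') : G.Win g e' := by
  induction h generalizing e' with
  | attack hg hm hu _ ih =>
    obtain ⟨f', hu', hf⟩ := UpdAtLeast.mono ⟨_, hu, le_rfl⟩ he le_rfl
    exact .attack hg hm hu' (ih hf)
  | defend hg hdef _ ih =>
    refine .defend hg (fun u g' hm => ?_) (fun u g' f' hm hu' => ?_) <;>
      obtain ⟨f, hu⟩ := Option.ne_none_iff_exists'.mp (hdef u g' hm)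
    · obtain ⟨f', hu', -⟩ := UpdAtLeast.mono ⟨f, hu, le_rfl⟩ he le_rfl
      simp [hu']
    · exact ih u g' f hm hu ((UpdAtLeast.mono ⟨f, hu, le_rfl⟩ he le_rfl).le_of_upd_eq hu')

theorem of_attack (hg : ¬ G.defender g) (hm : G.move g u g') (hu : UpdAtLeast e u x)
    (h : G.Win g' x) : G.Win g e :=
  let ⟨_, hu, hx⟩ := hu
  .attack hg hm hu (h.mono hx)

theorem of_defend (hg : G.defender g)
    (h : ∀ u g', G.move g u g' → ∃ x, UpdAtLeast e u x ∧ G.Win g' x) : G.Win g e := by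
  refine .defend hg (fun u g' hm => ?_) (fun u g' f hm hu => ?_)
  · obtain ⟨x, ⟨f, hu, -⟩, -⟩ := h u g' hm
    simp [hu]
  · obtain ⟨x, hx, hw⟩ := h u g' hm
    exact hw.mono (hx.le_of_upd_eq hu)

theorem induction_on' {P : Pos → Energy → Prop} (h : G.Win g e)
    (attack : ∀ {g u g' e e'}, ¬ G.defender g → G.move g u g' → upd e u = some e' →
      P g' e' → P g e)
    (defend : ∀ {g e}, G.defender g →
      (∀ u g', G.move g u g' → ∃ e', upd e u = some e' ∧ P g' e') → P g e) :
    P g e := by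
  induction h with
  | attack hg hm hu _ ih => exact attack hg hm hu ih
  | defend hg hdef _ ih =>
    refine defend hg fun u g' hm => ?_
    obtain ⟨f, hu⟩ := Option.ne_none_iff_exists'.mp (hdef u g' hm)
    exact ⟨f, hu, ih u g' f hm hu⟩

end EGame.Win

section Prices

variable {Act : Type} {τ : Act} {e : Energy} {I : Type} {ps : I → Conjunct Act τ}

theorem exprF_conj_le_iff :
    exprF (.conj I ps) ≤ e ↔ (Nonempty I → UpdAtLeast e (decU 4) (exprE (.conj I ps))) := by
  simp only [exprF, exprE, iSup_le_iff, UpdAtLeast.decU_iff]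
  refine forall_congr' fun hI => ?_
  rw [iSup_pos hI, add_assoc]

theorem exprE_obs_le_iff {a : Act} {ha : a ≠ τ} {φ : Formula Act τ} :
    exprE (.obs a ha φ) ≤ e ↔ UpdAtLeast e (decU 0) (exprF φ) := by
  rw [UpdAtLeast.decU_iff, exprE]

theorem exprE_conj_le_iff :
    exprE (.conj I ps) ≤ e ↔ (Nonempty I → UpdAtLeast e (decU 2) (⨆ i, exprC (ps i))) := by
  simp only [exprE, iSup_le_iff, UpdAtLeast.decU_iff]

theorem exprE_stableConj_le_iff :
    exprE (.stableConj I ps) ≤ e ↔ UpdAtLeast e (decU 3) (⨆ i, exprC (ps i)) := by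
  rw [UpdAtLeast.decU_iff, exprE]

theorem exprE_branchConj_le_iff {α : Act} {φ : Formula Act τ} :
    exprE (.branchConj α φ I ps) ≤ e ↔
      UpdAtLeast e minU16dec23 (unitE 0 + exprF φ) ∧
        UpdAtLeast e dec23 (⨆ i, exprC (ps i)) := by
  have h0 : (unitE 0 + exprF φ) 0 = 1 + exprF φ 0 := by simp [unitE]
  rw [UpdAtLeast.minU16dec23_iff, ← UpdAtLeast.sup_iff, UpdAtLeast.dec23_iff, h0, exprE]

theorem exprC_pos_le_iff {χ : DFormula Act τ} :
    exprC (.pos χ) ≤ e ↔ UpdAtLeast e minU16 (exprE χ) := by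
  rw [UpdAtLeast.minU16_iff, exprC]

theorem exprC_neg_le_iff {χ : DFormula Act τ} :
    exprC (.neg χ) ≤ e ↔ UpdAtLeast e minU17dec8 (exprE χ) := by
  rw [UpdAtLeast.minU17dec8_iff, exprC]

end Prices

section Game

variable {Proc Act : Type} {Tr : Proc → Act → Proc → Prop} {τ : Act} {p p' : Proc}
  {Q : Set Proc} {e x : Energy}

theorem win_attD_of_star (hs : Star Tr τ p p') (h : (specGame Tr τ).Win (.attD p' Q) e) :
    (specGame Tr τ).Win (.attD p Q) e := by
  induction hs using Relation.ReflTransGen.head_induction_on with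
  | refl => exact h
  | @head p₀ p₁ hstep _ ih =>
    by_cases hp : p₀ = p₁
    · exact hp ▸ ih
    · exact .of_attack not_false (GMove.procrastination hstep hp)
        (UpdAtLeast.zeroU_iff.mpr le_rfl) ih

theorem win_defC_empty : (specGame Tr τ).Win (.defC p ∅) e :=
  .of_defend trivial fun _ _ hm => by cases hm; contradiction

theorem win_defC (hx : UpdAtLeast e (decU 2) x)
    (h : ∀ q ∈ Q, (specGame Tr τ).Win (.attC p q) x) :
    (specGame Tr τ).Win (.defC p Q) e :=
  .of_defend trivial fun _ _ hm => by
    cases hm with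
    | conjAnswer hq => exact ⟨x, hx, h _ hq⟩

theorem win_defS (hx : UpdAtLeast e (decU 3) x)
    (h : ∀ q ∈ Q, (specGame Tr τ).Win (.attC p q) x) :
    (specGame Tr τ).Win (.defS p Q) e :=
  .of_defend trivial fun _ _ hm => by
    cases hm with
    | conjStableAnswer hq => exact ⟨x, hx, h _ hq⟩
    | stableFinishing => exact ⟨⊥, hx.mono le_rfl bot_le, win_defC_empty⟩

theorem win_defB {α : Act} {Qa : Set Proc} {f s : Energy}
    (hf : UpdAtLeast e minU16dec23 (unitE 0 + f))
    (hα : ∀ Q', SetOpt Tr τ Qa α Q' → (specGame Tr τ).Win (.att p' Q') f)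
    (hs : UpdAtLeast e dec23 s) (h : ∀ q ∈ Q, (specGame Tr τ).Win (.attC p q) s) :
    (specGame Tr τ).Win (.defB p α p' Q Qa) e :=
  .of_defend trivial fun _ _ hm => by
    cases hm with
    | branchAnswer hq => exact ⟨s, hs, h _ hq⟩
    | branchObservation hQ' =>
      exact ⟨_, hf, .of_attack not_false GMove.branchAccounting
        (UpdAtLeast.decU_iff.mpr le_rfl) (hα _ hQ')⟩

end Game

section Soundness

variable {Proc Act : Type} {Tr : Proc → Act → Proc → Prop} {τ : Act}

mutual

theorem win_att_of_distinguishes : ∀ (φ : Formula Act τ) {p : Proc} {Q : Set Proc},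
    Distinguishes Tr τ φ p Q → (specGame Tr τ).Win (.att p Q) (exprF φ)
  | .delayed χ, p, Q, ⟨⟨p', hs, hp'⟩, hQ⟩ => by
    refine .of_attack not_false (GMove.delay rfl) (UpdAtLeast.zeroU_iff.mpr le_rfl) ?_
    refine win_attD_of_star hs (win_attD_of_distinguishesD χ ⟨hp', ?_⟩)
    rintro q' ⟨q, hq, hqq'⟩ hq'
    exact hQ q hq ⟨q', hqq', hq'⟩
  | .conj I ps, p, Q, ⟨hp, hQ⟩ => by
    rcases Q.eq_empty_or_nonempty with rfl | hQne
    · exact .of_attack not_false GMove.finishing (UpdAtLeast.zeroU_iff.mpr bot_le) win_defC_empty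
    have ⟨q₀, hq₀⟩ := hQne
    have hI : Nonempty I := not_isEmpty_iff.mp fun hI => hQ q₀ hq₀ fun i => hI.elim i
    refine .of_attack not_false (GMove.immediateConj hQne.ne_empty)
      (exprF_conj_le_iff.mp le_rfl hI) ?_
    refine win_defC (exprE_conj_le_iff.mp le_rfl hI) fun q hq => ?_
    obtain ⟨i, hi⟩ := not_forall.mp (hQ q hq)
    exact (win_attC_of_distinguishesC (ps i) ⟨hp i, hi⟩).mono (le_iSup (exprC ∘ ps) i)

theorem win_attD_of_distinguishesD : ∀ (χ : DFormula Act τ) {p : Proc} {Q : Set Proc},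
    DistinguishesD Tr τ χ p Q → (specGame Tr τ).Win (.attD p Q) (exprE χ)
  | .obs a ha φ, p, Q, ⟨⟨p', hpp', hp'⟩, hQ⟩ => by
    refine .of_attack not_false (GMove.observation hpp' ha rfl) (exprE_obs_le_iff.mp le_rfl)
      (win_att_of_distinguishes φ ⟨hp', ?_⟩)
    rintro q' ⟨q, hq, hqq'⟩ hq'
    exact hQ q hq ⟨q', hqq', hq'⟩
  | .conj I ps, p, Q, ⟨hp, hQ⟩ => by
    by_cases hI : Nonempty I
    · refine .of_attack not_false GMove.lateConj (UpdAtLeast.zeroU_iff.mpr le_rfl)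
        (win_defC (exprE_conj_le_iff.mp le_rfl hI) fun q hq => ?_)
      obtain ⟨i, hi⟩ := not_forall.mp (hQ q hq)
      exact (win_attC_of_distinguishesC (ps i) ⟨hp i, hi⟩).mono (le_iSup (exprC ∘ ps) i)
    · obtain rfl : Q = ∅ := Q.eq_empty_of_forall_notMem fun q hq =>
        hQ q hq fun i => (hI ⟨i⟩).elim
      exact .of_attack not_false GMove.lateConj (UpdAtLeast.zeroU_iff.mpr le_rfl) win_defC_empty
  | .stableConj I ps, p, Q, ⟨⟨hstable, hp⟩, hQ⟩ => by
    refine .of_attack not_false (GMove.stableConj hstable) (UpdAtLeast.zeroU_iff.mpr le_rfl)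
      (win_defS (exprE_stableConj_le_iff.mp le_rfl) fun q ⟨hq, hqstable⟩ => ?_)
    obtain ⟨i, hi⟩ := not_forall.mp fun h => hQ q hq ⟨hqstable, h⟩
    exact (win_attC_of_distinguishesC (ps i) ⟨hp i, hi⟩).mono (le_iSup (exprC ∘ ps) i)
  | .branchConj α φ I ps, p, Q, ⟨⟨⟨p', hpp', hp'⟩, hp⟩, hQ⟩ => by
    obtain ⟨hf, hs⟩ := exprE_branchConj_le_iff.mp le_rfl
    -- the processes that no conjunct refutes are left to the branching observation
    let Qa := {q ∈ Q | ∀ i, SatC Tr τ q (ps i)}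
    refine .of_attack not_false (GMove.branchConj (Qa := Qa) hpp' fun q hq => hq.1)
      (UpdAtLeast.zeroU_iff.mpr le_rfl) (win_defB hf ?_ hs ?_)
    · rintro Q' rfl
      refine win_att_of_distinguishes φ ⟨hp', ?_⟩
      rintro q' ⟨q, ⟨hq, hqps⟩, hqq'⟩ hq'
      exact hQ q hq ⟨⟨q', hqq', hq'⟩, hqps⟩
    · rintro q ⟨hq, hqps⟩
      obtain ⟨i, hi⟩ := not_forall.mp fun h => hqps ⟨hq, h⟩
      exact (win_attC_of_distinguishesC (ps i) ⟨hp i, hi⟩).mono (le_iSup (exprC ∘ ps) i)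

theorem win_attC_of_distinguishesC : ∀ (ψ : Conjunct Act τ) {p q : Proc},
    DistinguishesC Tr τ ψ p q → (specGame Tr τ).Win (.attC p q) (exprC ψ)
  | .pos χ, p, q, ⟨⟨p', hpp', hp'⟩, hq⟩ => by
    refine .of_attack not_false (GMove.posConjunct rfl) (exprC_pos_le_iff.mp le_rfl) ?_
    refine win_attD_of_star hpp' (win_attD_of_distinguishesD χ ⟨hp', ?_⟩)
    rintro q' ⟨_, rfl, hqq'⟩ hq'
    exact hq ⟨q', hqq', hq'⟩
  | .neg χ, p, q, ⟨hp, hq⟩ => by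
    obtain ⟨q', hqq', hq'⟩ := not_not.mp hq
    have hpq : p ≠ q := by rintro rfl; exact hp ⟨q', hqq', hq'⟩
    refine .of_attack not_false (GMove.negConjunct rfl hpq) (exprC_neg_le_iff.mp le_rfl) ?_
    refine win_attD_of_star hqq' (win_attD_of_distinguishesD χ ⟨hq', ?_⟩)
    rintro p' ⟨_, rfl, hpp'⟩ hp'
    exact hp ⟨p', hpp', hp'⟩

end

end Soundness

section Completeness

variable {Proc Act : Type} {Tr : Proc → Act → Proc → Prop} {τ : Act} {p : Proc}
  {Q : Set Proc} {u : Update} {g g' : GPos Proc Act} {e e' : Energy}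

def Distinguishable (Tr : Proc → Act → Proc → Prop) (τ : Act) :
    GPos Proc Act → Energy → Prop
  | .att p Q, e => ∃ φ : Formula Act τ, exprF φ ≤ e ∧ Distinguishes Tr τ φ p Q
  | .attD p Q, e => ∃ χ : DFormula Act τ, exprE χ ≤ e ∧
      Sat Tr τ p (.delayed χ) ∧ ∀ q ∈ Q, ¬ SatD Tr τ q χ
  | .attC p q, e => ∃ ψ : Conjunct Act τ, exprC ψ ≤ e ∧ DistinguishesC Tr τ ψ p q
  | .attB p Q, e => ∃ φ : Formula Act τ, unitE 0 + exprF φ ≤ e ∧ Distinguishes Tr τ φ p Q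
  | .defC p Q, e => ∃ ψs : Q → Conjunct Act τ, exprE (.conj Q ψs) ≤ e ∧
      ∀ q : Q, DistinguishesC Tr τ (ψs q) p q
  | .defS p Q, e => ∃ ψs : Q → Conjunct Act τ, exprE (.stableConj Q ψs) ≤ e ∧
      ∀ q : Q, DistinguishesC Tr τ (ψs q) p q
  | .defB p α p' Q Qa, e => ∃ (φ : Formula Act τ) (ψs : Q → Conjunct Act τ),
      exprE (.branchConj α φ Q ψs) ≤ e ∧
      Distinguishes Tr τ φ p' {q' | ∃ q ∈ Qa, OptStep Tr τ q α q'} ∧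
      ∀ q : Q, DistinguishesC Tr τ (ψs q) p q

theorem distinguishable_att_of_move (hm : GMove Tr τ (.att p Q) u g') (hu : upd e u = some e')
    (h : Distinguishable Tr τ g' e') : Distinguishable Tr τ (.att p Q) e := by
  cases hm with
  | delay hQ =>
    obtain ⟨χ, hχ, hp, hQ'⟩ := h
    refine ⟨.delayed χ, UpdAtLeast.zeroU_iff.mp ⟨e', hu, hχ⟩, hp, ?_⟩
    rintro q hq ⟨q', hqq', hq'⟩
    exact hQ' q' (hQ ▸ ⟨q, hq, hqq'⟩) hq'
  | finishing =>
    obtain ⟨ψs, -, hψs⟩ := h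
    exact ⟨.conj _ ψs, exprF_conj_le_iff.mpr fun ⟨q⟩ => q.2.elim, fun q => (hψs q).1,
      fun q hq => hq.elim⟩
  | immediateConj _ =>
    obtain ⟨ψs, hle, hψs⟩ := h
    exact ⟨.conj _ ψs, exprF_conj_le_iff.mpr fun _ => ⟨e', hu, hle⟩, fun q => (hψs q).1,
      fun q hq hq' => (hψs ⟨q, hq⟩).2 (hq' ⟨q, hq⟩)⟩

theorem distinguishable_attD_of_move (hm : GMove Tr τ (.attD p Q) u g')
    (hu : upd e u = some e') (h : Distinguishable Tr τ g' e') :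
    Distinguishable Tr τ (.attD p Q) e := by
  cases hm with
  | procrastination hpp' _ =>
    obtain ⟨χ, hχ, ⟨p'', hs, hp''⟩, hQ⟩ := h
    exact ⟨χ, UpdAtLeast.zeroU_iff.mp ⟨e', hu, hχ⟩, ⟨p'', .head hpp' hs, hp''⟩, hQ⟩
  | observation hpp' ha hQ' =>
    obtain ⟨φ, hφ, hp', hQ''⟩ := h
    refine ⟨.obs _ ha φ, exprE_obs_le_iff.mpr ⟨e', hu, hφ⟩, ⟨p, .refl, _, hpp', hp'⟩,
      ?_⟩
    rintro q hq ⟨q', hqq', hq'⟩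
    exact hQ'' q' (hQ' ▸ ⟨q, hq, hqq'⟩) hq'
  | lateConj =>
    obtain ⟨ψs, hle, hψs⟩ := h
    exact ⟨.conj _ ψs, UpdAtLeast.zeroU_iff.mp ⟨e', hu, hle⟩,
      ⟨p, .refl, fun q => (hψs q).1⟩, fun q hq hq' => (hψs ⟨q, hq⟩).2 (hq' ⟨q, hq⟩)⟩
  | stableConj hstable =>
    obtain ⟨ψs, hle, hψs⟩ := h
    refine ⟨.stableConj _ ψs, UpdAtLeast.zeroU_iff.mp ⟨e', hu, hle⟩,
      ⟨p, .refl, hstable, fun q => (hψs q).1⟩, ?_⟩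
    rintro q hq ⟨hqstable, hq'⟩
    exact (hψs ⟨q, hq, hqstable⟩).2 (hq' _)
  | @branchConj _ _ _ _ Qa hpp' _ =>
    obtain ⟨φ, ψs, hle, ⟨hp', hQa⟩, hψs⟩ := h
    refine ⟨.branchConj _ φ _ ψs, UpdAtLeast.zeroU_iff.mp ⟨e', hu, hle⟩,
      ⟨p, .refl, ⟨_, hpp', hp'⟩, fun q => (hψs q).1⟩, ?_⟩
    rintro q hq ⟨⟨q', hqq', hq'⟩, hqψs⟩
    by_cases hqa : q ∈ Qa
    · exact hQa q' ⟨q, hqa, hqq'⟩ hq'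
    · exact (hψs ⟨q, hq, hqa⟩).2 (hqψs _)

theorem distinguishable_attC_of_move {q : Proc} (hm : GMove Tr τ (.attC p q) u g')
    (hu : upd e u = some e') (h : Distinguishable Tr τ g' e') :
    Distinguishable Tr τ (.attC p q) e := by
  cases hm with
  | posConjunct hQ =>
    obtain ⟨χ, hχ, hp, hQ'⟩ := h
    refine ⟨.pos χ, exprC_pos_le_iff.mpr ⟨e', hu, hχ⟩, hp, ?_⟩
    rintro ⟨q', hqq', hq'⟩
    exact hQ' q' (hQ ▸ ⟨q, rfl, hqq'⟩) hq'
  | negConjunct hP _ =>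
    obtain ⟨χ, hχ, hq, hP'⟩ := h
    refine ⟨.neg χ, exprC_neg_le_iff.mpr ⟨e', hu, hχ⟩, ?_, not_not_intro hq⟩
    rintro ⟨p', hpp', hp'⟩
    exact hP' p' (hP ▸ ⟨p, rfl, hpp'⟩) hp'

theorem distinguishable_defC
    (h : ∀ u g', GMove Tr τ (.defC p Q) u g' →
      ∃ e', upd e u = some e' ∧ Distinguishable Tr τ g' e') :
    Distinguishable Tr τ (.defC p Q) e := by
  have hq (q : Q) : ∃ ψ, UpdAtLeast e (decU 2) (exprC ψ) ∧ DistinguishesC Tr τ ψ p q := by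
    obtain ⟨e', hu, ψ, hψ, hd⟩ := h _ _ (GMove.conjAnswer q.2)
    exact ⟨ψ, ⟨e', hu, hψ⟩, hd⟩
  choose ψs hle hψs using hq
  exact ⟨ψs, exprE_conj_le_iff.mpr fun _ => .iSup hle, hψs⟩

theorem distinguishable_defS
    (h : ∀ u g', GMove Tr τ (.defS p Q) u g' →
      ∃ e', upd e u = some e' ∧ Distinguishable Tr τ g' e') :
    Distinguishable Tr τ (.defS p Q) e := by
  have hq (q : Q) : ∃ ψ, UpdAtLeast e (decU 3) (exprC ψ) ∧ DistinguishesC Tr τ ψ p q := by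
    obtain ⟨e', hu, ψ, hψ, hd⟩ := h _ _ (GMove.conjStableAnswer q.2)
    exact ⟨ψ, ⟨e', hu, hψ⟩, hd⟩
  choose ψs hle hψs using hq
  refine ⟨ψs, exprE_stableConj_le_iff.mpr ?_, hψs⟩
  rcases isEmpty_or_nonempty Q with hQ | hQ
  · obtain rfl : Q = ∅ := Set.isEmpty_coe_sort.mp hQ
    obtain ⟨e', hu, -⟩ := h _ _ GMove.stableFinishing
    exact ⟨e', hu, iSup_le isEmptyElim⟩
  · exact .iSup hle

theorem distinguishable_defB {α : Act} {p' : Proc} {Qa : Set Proc}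
    (h : ∀ u g', GMove Tr τ (.defB p α p' Q Qa) u g' →
      ∃ e', upd e u = some e' ∧ Distinguishable Tr τ g' e') :
    Distinguishable Tr τ (.defB p α p' Q Qa) e := by
  obtain ⟨e', hu, φ, hφ, hdist⟩ := h _ _ (GMove.branchObservation rfl)
  have hq (q : Q) : ∃ ψ, UpdAtLeast e dec23 (exprC ψ) ∧ DistinguishesC Tr τ ψ p q := by
    obtain ⟨e', hu, ψ, hψ, hd⟩ := h _ _ (GMove.branchAnswer q.2)
    exact ⟨ψ, ⟨e', hu, hψ⟩, hd⟩
  choose ψs hle hψs using hq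
  refine ⟨φ, ψs, exprE_branchConj_le_iff.mpr ⟨⟨e', hu, hφ⟩, ?_⟩, hdist, hψs⟩
  rcases isEmpty_or_nonempty Q with hQ | hQ
  · exact (UpdAtLeast.minU16dec23_iff.mp ⟨e', hu, hφ⟩).mono le_rfl (iSup_le isEmptyElim)
  · exact .iSup hle

theorem distinguishable_of_attack (hg : ¬ isDefender g) (hm : GMove Tr τ g u g')
    (hu : upd e u = some e') (h : Distinguishable Tr τ g' e') : Distinguishable Tr τ g e := by
  cases g with
  | att => exact distinguishable_att_of_move hm hu h
  | attD => exact distinguishable_attD_of_move hm hu h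
  | attC => exact distinguishable_attC_of_move hm hu h
  | attB =>
    cases hm
    obtain ⟨φ, hφ, hd⟩ := h
    exact ⟨φ, UpdAtLeast.decU_iff.mp ⟨e', hu, hφ⟩, hd⟩
  | defC | defS | defB => exact (hg trivial).elim

theorem distinguishable_of_defend (hg : isDefender g)
    (h : ∀ u g', GMove Tr τ g u g' →
      ∃ e', upd e u = some e' ∧ Distinguishable Tr τ g' e') :
    Distinguishable Tr τ g e := by
  cases g with
  | defC => exact distinguishable_defC h
  | defS => exact distinguishable_defS h
  | defB => exact distinguishable_defB h
  | att | attD | attC | attB => exact hg.elim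

theorem distinguishable_of_win (h : (specGame Tr τ).Win g e) : Distinguishable Tr τ g e :=
  h.induction_on' distinguishable_of_attack distinguishable_of_defend

end Completeness

/-- correctness of the weak spectroscopy game: there is a formula
of price at most `e` distinguishing `p` from `Q` iff the attacker wins
`[p,Q]_a` with budget `e`. -/
theorem spectroscopy_correctness {Proc Act : Type} (Tr : Proc → Act → Proc → Prop)
    (τ : Act) (e : Energy) (p : Proc) (Q : Set Proc) :
    (∃ φ : Formula Act τ, exprF φ ≤ e ∧ Distinguishes Tr τ φ p Q) ↔
      (specGame Tr τ).Win (.att p Q) e :=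
  ⟨fun ⟨φ, hle, hφ⟩ => (win_att_of_distinguishes φ hφ).mono hle, distinguishable_of_win⟩

end Spectroscopy
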